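/- arXiv:2307.05041 — 11 statements merged into one kernel-verified Lean document; each statement's English description precedes it below -/
import Mathlib

section
/- For any agent i, if Λ_i satisfies Strong Confinement (for ω ∈ S_Φ, Λ_i(ω) ⊆ S_Φ) and Projections Preserve Implicit Knowledge (for ω ∈ S_Φ and Ψ ⊆ Φ, the projection of Λ_i(ω) to S_Ψ equals Λ_i(ω_Ψ)), then Λ_i satisfies Projections Preserve Implicit Ignorance: for all Φ ⊆ At, if ω ∈ S_Φ then Λ_i^↑(ω) ⊆ Λ_i^↑(ω_Ψ) for all Ψ ⊆ Φ. -/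
/-- An HMS frame: a complete lattice of disjoint state spaces indexed by
subsets of a set `At` of atomic formulas, with commuting surjective
projections. Each state `ω` lives in exactly one space, recorded by `sp ω`;
`proj ω Ψ` is the projection of `ω` to the space indexed by `Ψ ⊆ sp ω`. -/
structure HMSFrame (At : Type) where
  Ω : Type
  sp : Ω → Set At
  proj : Ω → Set At → Ω
  nonempty_space : ∀ Φ : Set At, ∃ ω, sp ω = Φ
  sp_proj : ∀ ω (Ψ : Set At), Ψ ⊆ sp ω → sp (proj ω Ψ) = Ψ
  proj_self : ∀ ω, proj ω (sp ω) = ω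
  proj_comp : ∀ ω (Ψ Υ : Set At), Υ ⊆ Ψ → Ψ ⊆ sp ω →
    proj (proj ω Ψ) Υ = proj ω Υ
  proj_surj : ∀ (Φ Ψ : Set At), Ψ ⊆ Φ → ∀ ω', sp ω' = Ψ →
    ∃ ω, sp ω = Φ ∧ proj ω Ψ = ω'

namespace HMSFrame

variable {At : Type} (F : HMSFrame At)

/-- The state space indexed by `Φ`. -/
def S (Φ : Set At) : Set F.Ω := {ω | F.sp ω = Φ}

/-- The up-set `D^↑` of a set `D` contained in the space `S_Φ`. -/
def up (Φ : Set At) (D : Set F.Ω) : Set F.Ω :=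
  {ω | Φ ⊆ F.sp ω ∧ F.proj ω Φ ∈ D}

/-- Projection of a set of states to the space `S_Ψ`. -/
def projSet (D : Set F.Ω) (Ψ : Set At) : Set F.Ω :=
  (fun ω => F.proj ω Ψ) '' D

def NonemptyVals (P : F.Ω → Set F.Ω) : Prop := ∀ ω, (P ω).Nonempty

/-- Reflexivity: `ω ∈ P ω`. -/
def Reflexive' (P : F.Ω → Set F.Ω) : Prop := ∀ ω, ω ∈ P ω

/-- Stationarity: `ω' ∈ P ω` implies `P ω' = P ω`. -/
def Stationary (P : F.Ω → Set F.Ω) : Prop := ∀ ω ω', ω' ∈ P ω → P ω' = P ω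

/-- Strong Confinement: the possibility set at `ω` lies in `ω`'s own space. -/
def StrongConfinement (P : F.Ω → Set F.Ω) : Prop := ∀ ω, P ω ⊆ F.S (F.sp ω)

/-- Projections Preserve (Implicit) Knowledge: `(P ω)_Ψ = P (ω_Ψ)`. -/
def PPIK (P : F.Ω → Set F.Ω) : Prop :=
  ∀ ω (Ψ : Set At), Ψ ⊆ F.sp ω → F.projSet (P ω) Ψ = P (F.proj ω Ψ)

/-- Confinement: if `ω ∈ S_Φ` then `P ω ⊆ S_Ψ` for some `Ψ ⊆ Φ`. -/
def Confinement (P : F.Ω → Set F.Ω) : Prop :=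
  ∀ ω, ∃ Ψ : Set At, Ψ ⊆ F.sp ω ∧ P ω ⊆ F.S Ψ

/-- Generalized Reflexivity: `ω ∈ (P ω)^↑`. -/
def GenReflexive (P : F.Ω → Set F.Ω) : Prop :=
  ∀ ω (Ψ : Set At), P ω ⊆ F.S Ψ → ω ∈ F.up Ψ (P ω)

/-- Projections Preserve Ignorance: `P^↑(ω) ⊆ P^↑(ω_Ψ)`. -/
def PPIgn (P : F.Ω → Set F.Ω) : Prop :=
  ∀ ω (Ψ Υ Υ' : Set At), Ψ ⊆ F.sp ω → P ω ⊆ F.S Υ →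
    P (F.proj ω Ψ) ⊆ F.S Υ' → F.up Υ (P ω) ⊆ F.up Υ' (P (F.proj ω Ψ))

/-- Projections Preserve Knowledge: if `Υ ⊆ Ψ ⊆ Φ`, `ω ∈ S_Φ` and
`P ω ⊆ S_Ψ`, then `(P ω)_Υ = P (ω_Υ)`. -/
def PPK (P : F.Ω → Set F.Ω) : Prop :=
  ∀ ω (Ψ Υ : Set At), Υ ⊆ Ψ → Ψ ⊆ F.sp ω → P ω ⊆ F.S Ψ →
    F.projSet (P ω) Υ = P (F.proj ω Υ)

/-- The properties of an explicit possibility correspondence in an HMS model. -/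
def IsHMSPoss (P : F.Ω → Set F.Ω) : Prop :=
  F.NonemptyVals P ∧ F.Confinement P ∧ F.GenReflexive P ∧ F.Stationary P ∧
    F.PPIgn P ∧ F.PPK P

/-- Explicit Measurability: `ω' ∈ Λ ω` implies `Pi ω' = Pi ω`. -/
def ExplicitMeas (Λ Pi : F.Ω → Set F.Ω) : Prop :=
  ∀ ω ω', ω' ∈ Λ ω → Pi ω' = Pi ω

/-- Implicit Measurability: `ω' ∈ Pi ω` implies `Λ ω' = (Λ ω)_{S_{Pi ω}}`. -/
def ImplicitMeas (Λ Pi : F.Ω → Set F.Ω) : Prop :=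
  ∀ ω ω', ω' ∈ Pi ω → ∀ Ψ : Set At, Pi ω ⊆ F.S Ψ → Λ ω' = F.projSet (Λ ω) Ψ

/-- The properties of an implicit possibility correspondence. -/
def IsImplicitPoss (Λ : F.Ω → Set F.Ω) : Prop :=
  F.NonemptyVals Λ ∧ F.Reflexive' Λ ∧ F.Stationary Λ ∧ F.PPIK Λ

/-- A complemented HMS model: explicit possibility correspondence `Pi` with the
HMS properties, together with an implicit possibility correspondence `Λ`
satisfying Reflexivity, Stationarity, Projections Preserve Implicit Knowledge,
Explicit Measurability, and Implicit Measurability. -/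
def Complemented (Λ Pi : F.Ω → Set F.Ω) : Prop :=
  F.IsHMSPoss Pi ∧ F.IsImplicitPoss Λ ∧ F.ExplicitMeas Λ Pi ∧ F.ImplicitMeas Λ Pi

/-- `E` is an event with base-space `S_Φ`. -/
def IsEvent (Φ : Set At) (E : Set F.Ω) : Prop :=
  ∃ D : Set F.Ω, D ⊆ F.S Φ ∧ E = F.up Φ D

/-- The (implicit or explicit) knowledge operator induced by a possibility
correspondence, as a set of states. -/
def Lop (Λ : F.Ω → Set F.Ω) (E : Set F.Ω) : Set F.Ω := {ω | Λ ω ⊆ E}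

/-- The explicit knowledge operator. -/
def Kop (Pi : F.Ω → Set F.Ω) (E : Set F.Ω) : Set F.Ω := {ω | Pi ω ⊆ E}

/-- The awareness operator (for an event with base-space `S_Φ`):
the set of states where the space of the possibility set is at least `S_Φ`. -/
def Aop (Pi : F.Ω → Set F.Ω) (Φ : Set At) : Set F.Ω :=
  {ω | ∃ Ψ : Set At, Pi ω ⊆ F.S Ψ ∧ Φ ⊆ Ψ}

/-- Properties O, I, II, III, IV of the awareness function of an implicit
knowledge-based HMS model (`α ω` is the index of the awareness-level space). -/
def AwareFun (α : F.Ω → Set At) (Λ : F.Ω → Set F.Ω) : Prop :=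
  (∀ ω, α ω ⊆ F.sp ω) ∧
  (∀ ω ω', ω' ∈ Λ ω → α ω' = α ω) ∧
  (∀ ω (Ψ : Set At), Ψ ⊆ α ω → α (F.proj ω Ψ) = Ψ) ∧
  (∀ ω (Ψ : Set At), α ω ⊆ Ψ → Ψ ⊆ F.sp ω → α (F.proj ω Ψ) = α ω) ∧
  (∀ ω (Ψ : Set At), Ψ ⊆ F.sp ω → α (F.proj ω Ψ) ⊆ α ω)

/-- The derived explicit possibility correspondence
`Pi*(ω) := (Λ*(ω))_{α(ω)}`. -/
def Pstar (Λ : F.Ω → Set F.Ω) (α : F.Ω → Set At) (ω : F.Ω) : Set F.Ω :=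
  F.projSet (Λ ω) (α ω)

end HMSFrame

open HMSFrame in
/-- Strong Confinement and Projections Preserve Implicit
Knowledge imply Projections Preserve Implicit Ignorance:
for `ω ∈ S_Φ` and `Ψ ⊆ Φ`, `Λ^↑(ω) ⊆ Λ^↑(ω_Ψ)`. -/
theorem stmt1 {At : Type} (F : HMSFrame At) (Λ : F.Ω → Set F.Ω)
    (hne : F.NonemptyVals Λ) (hsc : F.StrongConfinement Λ)
    (hppik : F.PPIK Λ) :
    ∀ (ω : F.Ω) (Ψ : Set At), Ψ ⊆ F.sp ω →
      F.up (F.sp ω) (Λ ω) ⊆ F.up Ψ (Λ (F.proj ω Ψ)) := by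
  intro ω Ψ hΨ υ hυ
  obtain ⟨hsp, hmem⟩ := hυ
  refine ⟨hΨ.trans hsp, ?_⟩
  rw [← hppik ω Ψ hΨ]
  refine ⟨F.proj υ (F.sp ω), hmem, ?_⟩
  exact F.proj_comp υ (F.sp ω) Ψ hΨ hsp
end

section
/- In an HMS model, for any agent i and Υ ⊆ Ψ ⊆ Φ ⊆ At, if ω ∈ S_Φ and Π_i(ω) ⊆ S_Υ, then Π_i(ω_Ψ) = Π_i(ω). -/
open HMSFrame in
/-- in an HMS model, for `Υ ⊆ Ψ ⊆ Φ`, if `ω ∈ S_Φ` and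
`Pi(ω) ⊆ S_Υ`, then `Pi(ω_Ψ) = Pi(ω)`. -/
theorem stmt2 {At : Type} (F : HMSFrame At) (Pi : F.Ω → Set F.Ω)
    (hPi : F.IsHMSPoss Pi) :
    ∀ (ω : F.Ω) (Ψ Υ : Set At), Υ ⊆ Ψ → Ψ ⊆ F.sp ω → Pi ω ⊆ F.S Υ →
      Pi (F.proj ω Ψ) = Pi ω := by
  obtain ⟨hne, hconf, hgref, hstat, hppign, hppk⟩ := hPi
  intro ω Ψ Υ hUP hPs hPiU
  -- space of ω_Ψ
  have hspΨ : F.sp (F.proj ω Ψ) = Ψ := F.sp_proj ω Ψ hPs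
  -- confinement at ω_Ψ
  obtain ⟨Υ', hU'Ψ, hPiU'⟩ := hconf (F.proj ω Ψ)
  rw [hspΨ] at hU'Ψ
  -- Pi (ω_Υ) = Pi ω
  have hUs : Υ ⊆ F.sp ω := hUP.trans hPs
  have hprojPi : F.projSet (Pi ω) Υ = Pi ω := by
    apply Set.Subset.antisymm
    · rintro _ ⟨τ, hτ, rfl⟩
      have : F.sp τ = Υ := hPiU hτ
      show F.proj τ Υ ∈ Pi ω
      rw [← this, F.proj_self τ]; exact hτ
    · intro τ hτ
      refine ⟨τ, hτ, ?_⟩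
      have : F.sp τ = Υ := hPiU hτ
      show F.proj τ Υ = τ
      rw [← this, F.proj_self τ]
  have hPiωΥ : Pi (F.proj ω Υ) = Pi ω := by
    rw [← hppk ω Υ Υ (subset_refl _) hUs hPiU, hprojPi]
  -- PPIgn: up Υ (Pi ω) ⊆ up Υ' (Pi ω_Ψ)
  have hign : F.up Υ (Pi ω) ⊆ F.up Υ' (Pi (F.proj ω Ψ)) :=
    hppign ω Ψ Υ Υ' hPs hPiU hPiU'
  -- pick ω'' ∈ Pi ω
  obtain ⟨ω'', hω''⟩ := hne ω
  have hspω'' : F.sp ω'' = Υ := hPiU hω''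
  have hω''up : ω'' ∈ F.up Υ (Pi ω) := by
    refine ⟨hspω''.symm.subset, ?_⟩
    rw [← hspω'', F.proj_self ω'']; exact hω''
  obtain ⟨hU'ω'', hτmem⟩ := hign hω''up
  rw [hspω''] at hU'ω''
  -- Υ ⊆ Υ' via PPIgn at ω_Ψ projecting to Υ
  have hcomp : F.proj (F.proj ω Ψ) Υ = F.proj ω Υ := F.proj_comp ω Ψ Υ hUP hPs
  have hPiωΥsub : Pi (F.proj (F.proj ω Ψ) Υ) ⊆ F.S Υ := by
    rw [hcomp, hPiωΥ]; exact hPiU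
  have hign2 : F.up Υ' (Pi (F.proj ω Ψ)) ⊆
      F.up Υ (Pi (F.proj (F.proj ω Ψ) Υ)) := by
    apply hppign (F.proj ω Ψ) Υ Υ' Υ _ hPiU' hPiωΥsub
    rw [hspΨ]; exact hUP
  set τ := F.proj ω'' Υ' with hτ
  have hspτ : F.sp τ = Υ' := F.sp_proj ω'' Υ' (by rw [hspω'']; exact hU'ω'')
  have hτup : τ ∈ F.up Υ' (Pi (F.proj ω Ψ)) := by
    refine ⟨hspτ.symm.subset, ?_⟩
    rw [← hspτ, F.proj_self τ]; exact hτmem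
  have hUU' : Υ ⊆ Υ' := by
    have := (hign2 hτup).1
    rwa [hspτ] at this
  have hUeq : Υ' = Υ := Set.Subset.antisymm hU'ω'' hUU'
  -- hence τ = ω''
  have hτeq : τ = ω'' := by
    rw [hτ, hUeq, ← hspω'', F.proj_self ω'']
  rw [hτeq] at hτmem
  rw [← hstat (F.proj ω Ψ) ω'' hτmem, hstat ω ω'' hω'']
end

section
/- In a complemented HMS model, for any agent i, if ω' ∈ Π_i(ω), then Λ_i(ω') = Π_i(ω'). -/
open HMSFrame in
/-- in a complemented HMS model, if `ω' ∈ Pi(ω)` then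
`Λ(ω') = Pi(ω')`. -/
theorem stmt3 {At : Type} (F : HMSFrame At) (Λ Pi : F.Ω → Set F.Ω)
    (h : F.Complemented Λ Pi) :
    ∀ ω ω' : F.Ω, ω' ∈ Pi ω → Λ ω' = Pi ω' := by
  obtain ⟨⟨hne, hconf, hgr, hstat, _, _⟩, ⟨_, hrefl, _, _⟩, hem, him⟩ := h
  intro ω ω' hω'
  obtain ⟨Ψ, hΨsub, hΨ⟩ := hconf ω
  have hLam : Λ ω' = F.projSet (Λ ω) Ψ := him ω ω' hω' Ψ hΨ
  have hPi' : Pi ω' = Pi ω := hstat ω ω' hω'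
  rw [hLam, hPi']
  ext x
  constructor
  · rintro ⟨w, hw, rfl⟩
    have hPw : Pi w = Pi ω := hem ω w hw
    have := hgr w Ψ (hPw ▸ hΨ)
    rw [hPw] at this
    exact this.2
  · intro hx
    have hLx : Λ x = F.projSet (Λ ω) Ψ := him ω x hx Ψ hΨ
    have := hrefl x
    rwa [hLx] at this
end

section
/- In a complemented HMS model, for any agent i and any state ω, the projection of the implicit possibility set Λ_i(ω) to the space containing Π_i(ω) equals Π_i(ω): (Λ_i(ω))_{S_{Π_i(ω)}} = Π_i(ω). (Coherence) -/
open HMSFrame in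
/-- Coherence: in a complemented HMS model, the projection of
`Λ(ω)` to the space containing `Pi(ω)` equals `Pi(ω)`. -/
theorem stmt4 {At : Type} (F : HMSFrame At) (Λ Pi : F.Ω → Set F.Ω)
    (h : F.Complemented Λ Pi) :
    ∀ (ω : F.Ω) (Ψ : Set At), Pi ω ⊆ F.S Ψ → F.projSet (Λ ω) Ψ = Pi ω := by
  obtain ⟨⟨_, _, hgen, _, _, _⟩, ⟨_, hrefl, _, _⟩, hEM, hIM⟩ := h
  intro ω Ψ hΨ
  apply Set.Subset.antisymm
  · rintro _ ⟨ω₀, hω₀, rfl⟩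
    have hPi : Pi ω₀ = Pi ω := hEM ω ω₀ hω₀
    have := hgen ω₀ Ψ (hPi ▸ hΨ)
    rw [hPi] at this
    exact this.2
  · intro ω₁ hω₁
    have := hIM ω ω₁ hω₁ Ψ hΨ
    rw [← this]
    exact hrefl ω₁
end

section
/- In a complemented HMS model, the implicit knowledge operator L_i satisfies Positive Introspection: for every event E, L_i(E) ⊆ L_i(L_i(E)). -/
open HMSFrame in
/-- Positive Introspection: in a complemented HMS model,
`L(E) ⊆ L(L(E))` for every event `E`. -/
theorem stmt7 {At : Type} (F : HMSFrame At) (Λ Pi : F.Ω → Set F.Ω)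
    (h : F.Complemented Λ Pi) (Φ : Set At) (E : Set F.Ω)
    (hE : F.IsEvent Φ E) :
    F.Lop Λ E ⊆ F.Lop Λ (F.Lop Λ E) := by
  intro ω hω ω' hω'
  have hstat := h.2.1.2.2.1 ω ω' hω'
  simpa [HMSFrame.Lop, hstat] using hω
end

section
/- In a complemented HMS model, for every agent i and event E, explicit knowledge equals implicit knowledge together with awareness: K_i(E) = L_i(E) ∩ A_i(E). -/
open HMSFrame in
/-- in a complemented HMS model, explicit knowledge equals
implicit knowledge and awareness: `K(E) = L(E) ∩ A(E)` for every event `E`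
(with base `D` and base-space `S_Φ`). -/
theorem stmt10 {At : Type} (F : HMSFrame At) (Λ Pi : F.Ω → Set F.Ω)
    (h : F.Complemented Λ Pi) (Φ : Set At) (D : Set F.Ω) (hD : D ⊆ F.S Φ) :
    F.Kop Pi (F.up Φ D) = F.Lop Λ (F.up Φ D) ∩ F.Aop Pi Φ := by
  obtain ⟨⟨hPne, hConf, hGR, hPstat, hPPIgn, hPPK⟩, ⟨hLne, hLrefl, hLstat, hPPIK⟩,
    hEM, hIM⟩ := h
  ext ω
  constructor
  · intro (hK : Pi ω ⊆ F.up Φ D)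
    obtain ⟨Ψ, hΨsp, hΨ⟩ := hConf ω
    obtain ⟨ω₀, hω₀⟩ := hPne ω
    have hΦΨ : Φ ⊆ Ψ := by
      have h1 := (hK hω₀).1
      have h2 := hΨ hω₀
      rwa [h2] at h1
    refine ⟨?_, ⟨Ψ, hΨ, hΦΨ⟩⟩
    intro ω'' hω''
    have hPeq : Pi ω'' = Pi ω := hEM ω ω'' hω''
    have hΨ'' : Pi ω'' ⊆ F.S Ψ := hPeq ▸ hΨ
    have hgr := hGR ω'' Ψ hΨ''
    obtain ⟨hΨsp'', hmem⟩ := hgr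
    rw [hPeq] at hmem
    have hup : F.proj ω'' Ψ ∈ F.up Φ D := hK hmem
    obtain ⟨hΦsub, hprojD⟩ := hup
    refine ⟨hΦΨ.trans hΨsp'', ?_⟩
    rwa [F.proj_comp ω'' Ψ Φ hΦΨ hΨsp''] at hprojD
  · rintro ⟨(hL : Λ ω ⊆ F.up Φ D), Ψ, hΨ, hΦΨ⟩
    intro ω' hω'
    have hΛ' : Λ ω' = F.projSet (Λ ω) Ψ := hIM ω ω' hω' Ψ hΨ
    have hrefl : ω' ∈ Λ ω' := hLrefl ω'
    rw [hΛ'] at hrefl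
    obtain ⟨ω'', hω''Λ, hproj⟩ := hrefl
    have hPeq : Pi ω'' = Pi ω := hEM ω ω'' hω''Λ
    have hΨ'' : Pi ω'' ⊆ F.S Ψ := hPeq ▸ hΨ
    obtain ⟨hΨsp'', _⟩ := hGR ω'' Ψ hΨ''
    have hE : ω'' ∈ F.up Φ D := hL hω''Λ
    obtain ⟨hΦsub, hprojD⟩ := hE
    subst hproj
    refine ⟨?_, ?_⟩
    · rw [F.sp_proj ω'' Ψ hΨsp'']; exact hΦΨ
    · rwa [F.proj_comp ω'' Ψ Φ hΦΨ hΨsp'']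
end

section
/- In an implicit knowledge-based HMS model, the derived explicit possibility correspondence Π*_i defined by Π*_i(ω_Φ) := (Λ*_i(ω))_{α_i(ω_Φ)} satisfies Confinement: if ω ∈ S_Φ then Π*_i(ω) ⊆ S_Ψ for some Ψ ⊆ Φ. -/
open HMSFrame in
/-- in an implicit knowledge-based HMS model, the derived
explicit possibility correspondence `Pi*(ω) := (Λ*(ω))_{α(ω)}` satisfies
Confinement. -/
theorem stmt13 {At : Type} (F : HMSFrame At) (Λ : F.Ω → Set F.Ω)
    (α : F.Ω → Set At) (hΛ : F.IsImplicitPoss Λ) (hα : F.AwareFun α Λ) :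
    F.Confinement (F.Pstar Λ α) := by
  intro ω
  refine ⟨α ω, hα.1 ω, ?_⟩
  rintro _ ⟨ω', hω', rfl⟩
  have hI : α ω' = α ω := hα.2.1 ω ω' hω'
  have : α ω' ⊆ F.sp ω' := hα.1 ω'
  simpa [HMSFrame.S, hI] using F.sp_proj ω' (α ω) (hI ▸ this)
end

section
/- In an implicit knowledge-based HMS model, the derived explicit possibility correspondence Π*_i defined by Π*_i(ω_Φ) := (Λ*_i(ω))_{α_i(ω_Φ)} satisfies Generalized Reflexivity: ω ∈ (Π*_i(ω))^↑ for every ω ∈ Ω. -/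
open HMSFrame in
/-- in an implicit knowledge-based HMS model, the derived
explicit possibility correspondence `Pi*(ω) := (Λ*(ω))_{α(ω)}` satisfies
Generalized Reflexivity: `ω ∈ (Pi*(ω))^↑`. -/
theorem stmt14 {At : Type} (F : HMSFrame At) (Λ : F.Ω → Set F.Ω)
    (α : F.Ω → Set At) (hΛ : F.IsImplicitPoss Λ) (hα : F.AwareFun α Λ) :
    F.GenReflexive (F.Pstar Λ α) := by
  intro ω Ψ hsub
  obtain ⟨-, hrefl, -, -⟩ := hΛ
  have hαsp : α ω ⊆ F.sp ω := hα.1 ω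
  have hmem : F.proj ω (α ω) ∈ F.Pstar Λ α ω := ⟨ω, hrefl ω, rfl⟩
  have hΨ : Ψ = α ω := by
    have := hsub hmem
    simp only [HMSFrame.S, Set.mem_setOf_eq] at this
    rw [← this, F.sp_proj ω (α ω) hαsp]
  subst hΨ
  exact ⟨hαsp, hmem⟩
end

section
/- In an implicit knowledge-based HMS model, the derived explicit possibility correspondence Π*_i satisfies Stationarity: ω' ∈ Π*_i(ω) implies Π*_i(ω') = Π*_i(ω). -/
open HMSFrame in
/-- in an implicit knowledge-based HMS model, the derived
explicit possibility correspondence `Pi*` satisfies Stationarity. -/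
theorem stmt15 {At : Type} (F : HMSFrame At) (Λ : F.Ω → Set F.Ω)
    (α : F.Ω → Set At) (hΛ : F.IsImplicitPoss Λ) (hα : F.AwareFun α Λ) :
    F.Stationary (F.Pstar Λ α) := by
  obtain ⟨hne, hrefl, hstat, hppik⟩ := hΛ
  obtain ⟨hO, hI, hII, hIII, hIV⟩ := hα
  intro ω ω' hmem
  obtain ⟨ω₀, hω₀, rfl⟩ := hmem
  have hα0 : α ω₀ = α ω := hI ω ω₀ hω₀
  have hsub : α ω ⊆ F.sp ω₀ := hα0 ▸ hO ω₀
  have hα' : α (F.proj ω₀ (α ω)) = α ω := by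
    have := hIII ω₀ (α ω) (hα0.le) hsub
    rw [this, hα0]
  have hΛ' : Λ (F.proj ω₀ (α ω)) = F.projSet (Λ ω) (α ω) := by
    rw [← hppik ω₀ (α ω) hsub, hstat ω ω₀ hω₀]
  unfold HMSFrame.Pstar
  rw [hα', hΛ']
  unfold HMSFrame.projSet
  rw [Set.image_image]
  apply Set.image_congr
  intro x hx
  have hαx : α x = α ω := hI ω x hx
  have : α ω ⊆ F.sp x := hαx ▸ hO x
  exact F.proj_comp x (α ω) (α ω) le_rfl this
end

section
/- In an implicit knowledge-based HMS model, the correspondences Λ*_i and the derived Π*_i jointly satisfy Explicit Measurability (ω' ∈ Λ*_i(ω) implies Π*_i(ω') = Π*_i(ω)) and Implicit Measurability (ω' ∈ Π*_i(ω) implies Λ*_i(ω') = (Λ*_i(ω))_{S_{Π*_i(ω)}}). -/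
open HMSFrame in
/-- in an implicit knowledge-based HMS model, `Λ*` and the
derived `Pi*` jointly satisfy Explicit Measurability and Implicit
Measurability. -/
theorem stmt16 {At : Type} (F : HMSFrame At) (Λ : F.Ω → Set F.Ω)
    (α : F.Ω → Set At) (hΛ : F.IsImplicitPoss Λ) (hα : F.AwareFun α Λ) :
    F.ExplicitMeas Λ (F.Pstar Λ α) ∧ F.ImplicitMeas Λ (F.Pstar Λ α) := by
  obtain ⟨hne, hrefl, hstat, hppik⟩ := hΛ
  obtain ⟨hO, hI, hII, hIII, hIV⟩ := hα
  constructor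
  · intro ω ω' hω'
    unfold HMSFrame.Pstar
    rw [hstat ω ω' hω', hI ω ω' hω']
  · intro ω ω' hω' Ψ hΨ
    obtain ⟨ω'', hω'', rfl⟩ := hω'
    have hαsub : α ω ⊆ F.sp ω'' := by
      rw [← hI ω ω'' hω'']; exact hO ω''
    -- determine Ψ = α ω
    have hΨeq : Ψ = α ω := by
      have hmem : F.proj ω (α ω) ∈ F.Pstar Λ α ω := ⟨ω, hrefl ω, rfl⟩
      have h1 := hΨ hmem
      have h2 : F.sp (F.proj ω (α ω)) = α ω := F.sp_proj ω (α ω) (hO ω)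
      rw [HMSFrame.S, Set.mem_setOf_eq, h2] at h1
      exact h1.symm
    have key : Λ (F.proj ω'' (α ω)) = F.projSet (Λ ω'') (α ω) :=
      (hppik ω'' (α ω) hαsub).symm
    rw [key, hstat ω ω'' hω'', hΨeq]
end

section
/- For any category of FH models ⟨(K_Φ)_{Φ⊆At}, (f^Φ_Ψ)⟩, the T-transform — defined by taking S_Φ := W_Φ, projections r^Φ_Ψ := f^Φ_Ψ, implicit possibility correspondences Λ*_i(w) := {w' : (w,w') ∈ R_{Φ,i}} for w ∈ S_Φ, awareness functions α_i(w) := S_Υ where Υ = At(A_{Ψ,i}(w)) for w ∈ S_Ψ, and valuation v(p) := ⋃_Φ V_Φ(p) — yields correspondences Λ*_i satisfying Reflexivity, Stationarity, and Projections Preserve Implicit Knowledge, and awareness functions α_i satisfying properties O, I, II, III, and IV of an implicit knowledge-based HMS model. -/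
/-- The language `L_At`: `φ ::= ⊤ | p | ¬φ | φ∧ψ | ℓ_i φ | a_i φ`
(explicit knowledge is defined: `k_i φ := ℓ_i φ ∧ a_i φ`). -/
inductive Form (At I : Type) : Type
  | top : Form At I
  | atom : At → Form At I
  | neg : Form At I → Form At I
  | conj : Form At I → Form At I → Form At I
  | ell : I → Form At I → Form At I
  | aw : I → Form At I → Form At I

namespace Form

/-- The set of atoms occurring in a formula; `φ ∈ L_Ψ` iff `φ.atoms ⊆ Ψ`. -/
def atoms {At I : Type} : Form At I → Set At
  | top => ∅
  | atom p => {p}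
  | neg φ => φ.atoms
  | conj φ ψ => φ.atoms ∪ ψ.atoms
  | ell _ φ => φ.atoms
  | aw _ φ => φ.atoms

end Form

/-- A partitional, propositionally determined Fagin–Halpern awareness model
for the sublanguage `L_Φ`. -/
structure FHModel (At I : Type) (Φ : Set At) where
  W : Type
  Wne : Nonempty W
  R : I → W → W → Prop
  Aw : I → W → Set (Form At I)
  V : At → Set W
  partitional : ∀ i, Equivalence (R i)
  aw_lang : ∀ i w (φ : Form At I), φ ∈ Aw i w → φ.atoms ⊆ Φ
  propDet : ∀ i w (φ : Form At I), φ.atoms ⊆ Φ →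
      (φ ∈ Aw i w ↔ ∀ p ∈ φ.atoms, Form.atom p ∈ Aw i w)
  knowAware : ∀ i w t, R i w t → Aw i w = Aw i t

/-- Satisfaction in an FH model. -/
def FHModel.sat {At I : Type} {Φ : Set At} (M : FHModel At I Φ) :
    M.W → Form At I → Prop
  | _, .top => True
  | w, .atom p => w ∈ M.V p
  | w, .neg φ => ¬ M.sat w φ
  | w, .conj φ ψ => M.sat w φ ∧ M.sat w ψ
  | w, .ell i φ => ∀ t, M.R i w t → M.sat t φ
  | w, .aw i φ => φ ∈ M.Aw i w

/-- A surjective bounded morphism from the FH model `M` for `Φ` to the FH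
model `N` for `Ψ ⊆ Φ`: surjectivity, atomic harmony, awareness consistency,
homomorphism, and back. -/
def IsBoundedMorphism {At I : Type} {Φ Ψ : Set At} (_hsub : Ψ ⊆ Φ)
    (M : FHModel At I Φ) (N : FHModel At I Ψ) (f : M.W → N.W) : Prop :=
  Function.Surjective f ∧
  (∀ p ∈ Ψ, ∀ w, w ∈ M.V p ↔ f w ∈ N.V p) ∧
  (∀ i w, {φ ∈ M.Aw i w | Form.atoms φ ⊆ Ψ} = N.Aw i (f w)) ∧
  (∀ i w t, M.R i w t → N.R i (f w) (f t)) ∧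
  (∀ i w t', N.R i (f w) t' → ∃ t, f t = t' ∧ M.R i w t)

/-- A category of FH models: one FH model for each `Φ ⊆ At`, together with
commuting surjective bounded morphisms `f^Φ_Ψ` for `Ψ ⊆ Φ`, with `f^Φ_Φ`
the identity. -/
structure FHCategory (At I : Type) where
  K : (Φ : Set At) → FHModel At I Φ
  f : ∀ (Φ Ψ : Set At), Ψ ⊆ Φ → (K Φ).W → (K Ψ).W
  f_bm : ∀ (Φ Ψ : Set At) (h : Ψ ⊆ Φ), IsBoundedMorphism h (K Φ) (K Ψ) (f Φ Ψ h)
  f_id : ∀ (Φ : Set At) (h : Φ ⊆ Φ) (w : (K Φ).W), f Φ Φ h w = w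
  f_comp : ∀ (Φ Ψ Υ : Set At) (h1 : Υ ⊆ Ψ) (h2 : Ψ ⊆ Φ) (w : (K Φ).W),
      f Ψ Υ h1 (f Φ Ψ h2 w) = f Φ Υ (h1.trans h2) w

namespace FHCategory

variable {At I : Type} (C : FHCategory At I)

/-- The state set `Ω` of the T-transform: the disjoint union of the state
spaces `S_Φ := W_Φ`; a state records its space index. -/
def TΩ := Σ Φ : Set At, (C.K Φ).W

open Classical in
/-- The projections `r^Φ_Ψ := f^Φ_Ψ` of the T-transform (total function;
junk value outside the meaningful domain `Ψ ⊆ Φ`). -/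
noncomputable def Tproj (x : C.TΩ) (Ψ : Set At) : C.TΩ :=
  if h : Ψ ⊆ x.1 then ⟨Ψ, C.f x.1 Ψ h x.2⟩ else x

/-- The implicit possibility correspondence of the T-transform:
`w' ∈ Λ*_i(w)` iff `(w, w') ∈ R_{Φ,i}` for `w ∈ S_Φ`. -/
def ΛT (i : I) (x : C.TΩ) : Set C.TΩ :=
  {y | ∃ w' : (C.K x.1).W, (C.K x.1).R i x.2 w' ∧ y = ⟨x.1, w'⟩}

/-- The awareness function of the T-transform: `α_i(w)` is (the space indexed
by) the set of atoms occurring in the awareness set `A_{Ψ,i}(w)`. -/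
def αT (i : I) (x : C.TΩ) : Set At :=
  {p | ∃ φ ∈ (C.K x.1).Aw i x.2, p ∈ Form.atoms φ}

end FHCategory

/-!
Reflexivity, stationarity, O and I come straight from the axioms of a single FH model;
the remaining clauses are facts about one bounded morphism `f : K_Φ → K_Ψ`. The
homomorphism and back conditions say exactly that `f` maps the `R_i`-cell of `w`
onto the `R_i`-cell of `f w`, which is projection-preservation of implicit knowledge.
Awareness consistency together with propositional determination gives
`α_i(f w) = α_i(w) ∩ Ψ`: an atom `p ∈ Ψ` occurring in some formula the agent is aware
of at `w` is itself in `A_i(w)`, hence survives the restriction to `L_Ψ`. Properties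
II, III and IV are then the three elementary facts about `α ∩ Ψ`.
-/

namespace IsBoundedMorphism

variable {At I : Type} {Φ Ψ : Set At} {hsub : Ψ ⊆ Φ} {M : FHModel At I Φ}
  {N : FHModel At I Ψ} {f : M.W → N.W}

theorem image_R_eq (hf : IsBoundedMorphism hsub M N f) (i : I) (w : M.W) :
    f '' {t | M.R i w t} = {t' | N.R i (f w) t'} := by
  ext t'
  constructor
  · rintro ⟨t, hR, rfl⟩
    exact hf.2.2.2.1 i w t hR
  · intro hR
    obtain ⟨t, rfl, hRt⟩ := hf.2.2.2.2 i w t' hR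
    exact ⟨t, hRt, rfl⟩

theorem awareAtoms_eq (hf : IsBoundedMorphism hsub M N f) (i : I) (w : M.W) :
    {p | ∃ φ ∈ N.Aw i (f w), p ∈ φ.atoms} = {p | ∃ φ ∈ M.Aw i w, p ∈ φ.atoms} ∩ Ψ := by
  have hconsistent := hf.2.2.1 i w
  ext p
  constructor
  · rintro ⟨φ, hφ, hp⟩
    rw [← hconsistent] at hφ
    exact ⟨⟨φ, hφ.1, hp⟩, hφ.2 hp⟩
  · rintro ⟨⟨φ, hφ, hp⟩, hpΨ⟩
    have hatom : Form.atom p ∈ M.Aw i w :=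
      (M.propDet i w φ (M.aw_lang i w φ hφ)).1 hφ p hp
    refine ⟨Form.atom p, ?_, rfl⟩
    rw [← hconsistent]
    exact ⟨hatom, Set.singleton_subset_iff.2 hpΨ⟩

end IsBoundedMorphism

theorem Equivalence.setOf_eq_of_rel {α : Type*} {r : α → α → Prop} (hr : Equivalence r)
    {x y : α} (hxy : r x y) : {z | r y z} = {z | r x z} := by
  ext z
  exact ⟨hr.trans hxy, hr.trans (hr.symm hxy)⟩

namespace FHCategory

variable {At I : Type} (C : FHCategory At I)

theorem Tproj_of_subset (x : C.TΩ) {Ψ : Set At} (h : Ψ ⊆ x.1) :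
    C.Tproj x Ψ = ⟨Ψ, C.f x.1 Ψ h x.2⟩ :=
  dif_pos h

theorem ΛT_mk (i : I) (Φ : Set At) (w : (C.K Φ).W) :
    C.ΛT i ⟨Φ, w⟩ = (Sigma.mk Φ '' {w' | (C.K Φ).R i w w'} : Set C.TΩ) := by
  ext y
  constructor
  · rintro ⟨w', hR, rfl⟩
    exact ⟨w', hR, rfl⟩
  · rintro ⟨w', hR, rfl⟩
    exact ⟨w', hR, rfl⟩

theorem mem_ΛT_self (i : I) (x : C.TΩ) : x ∈ C.ΛT i x :=
  ⟨x.2, ((C.K x.1).partitional i).refl x.2, rfl⟩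

theorem ΛT_eq_of_mem (i : I) {x y : C.TΩ} (hy : y ∈ C.ΛT i x) : C.ΛT i y = C.ΛT i x := by
  obtain ⟨Φ, w⟩ := x
  obtain ⟨w', hR, rfl⟩ := hy
  rw [ΛT_mk, ΛT_mk, ((C.K Φ).partitional i).setOf_eq_of_rel hR]

theorem image_Tproj_ΛT (i : I) (x : C.TΩ) {Ψ : Set At} (h : Ψ ⊆ x.1) :
    (fun y => C.Tproj y Ψ) '' C.ΛT i x = C.ΛT i (C.Tproj x Ψ) := by
  obtain ⟨Φ, w⟩ := x
  rw [C.Tproj_of_subset _ h, ΛT_mk, ΛT_mk, ← (C.f_bm Φ Ψ h).image_R_eq i w]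
  calc (fun y => C.Tproj y Ψ) '' (Sigma.mk Φ '' {w' | (C.K Φ).R i w w'})
      = (fun w' => C.Tproj ⟨Φ, w'⟩ Ψ) '' {w' | (C.K Φ).R i w w'} := Set.image_image _ _ _
    _ = ((fun w' => ⟨Ψ, C.f Φ Ψ h w'⟩) '' {w' | (C.K Φ).R i w w'} : Set C.TΩ) :=
      Set.image_congr fun w' _ => C.Tproj_of_subset ⟨Φ, w'⟩ h
    _ = (Sigma.mk Ψ '' (C.f Φ Ψ h '' {w' | (C.K Φ).R i w w'}) : Set C.TΩ) :=
      (Set.image_image _ _ _).symm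

theorem αT_subset (i : I) (x : C.TΩ) : C.αT i x ⊆ x.1 := by
  rintro p ⟨φ, hφ, hp⟩
  exact (C.K x.1).aw_lang i x.2 φ hφ hp

theorem αT_eq_of_mem_ΛT (i : I) {x y : C.TΩ} (hy : y ∈ C.ΛT i x) : C.αT i y = C.αT i x := by
  obtain ⟨w', hR, rfl⟩ := hy
  simp only [αT, (C.K x.1).knowAware i x.2 w' hR]

theorem αT_Tproj (i : I) (x : C.TΩ) {Ψ : Set At} (h : Ψ ⊆ x.1) :
    C.αT i (C.Tproj x Ψ) = C.αT i x ∩ Ψ := by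
  rw [C.Tproj_of_subset x h]
  exact (C.f_bm x.1 Ψ h).awareAtoms_eq i x.2

end FHCategory

/-- the T-transform of a category of FH models yields implicit
possibility correspondences `Λ*_i` satisfying Reflexivity, Stationarity, and
Projections Preserve Implicit Knowledge, and awareness functions `α_i`
satisfying properties O, I, II, III, and IV of an implicit knowledge-based
HMS model. -/
theorem stmt19 {At I : Type} (C : FHCategory At I) (i : I) :
    -- Reflexivity
    (∀ x : C.TΩ, x ∈ C.ΛT i x) ∧
    -- Stationarity
    (∀ x y : C.TΩ, y ∈ C.ΛT i x → C.ΛT i y = C.ΛT i x) ∧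
    -- Projections Preserve Implicit Knowledge: (Λ*_i(ω))_Ψ = Λ*_i(ω_Ψ)
    (∀ (x : C.TΩ) (Ψ : Set At), Ψ ⊆ x.1 →
      (fun y => C.Tproj y Ψ) '' (C.ΛT i x) = C.ΛT i (C.Tproj x Ψ)) ∧
    -- O: α_i(ω) ⪯ S_ω
    (∀ x : C.TΩ, C.αT i x ⊆ x.1) ∧
    -- I: α_i constant on Λ*_i-cells
    (∀ x y : C.TΩ, y ∈ C.ΛT i x → C.αT i y = C.αT i x) ∧
    -- II: if S_Ψ ⪯ α_i(ω) then α_i(ω_Ψ) = S_Ψ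
    (∀ (x : C.TΩ) (Ψ : Set At), Ψ ⊆ C.αT i x → C.αT i (C.Tproj x Ψ) = Ψ) ∧
    -- III: if α_i(ω) ⪯ S_Ψ ⪯ S_ω then α_i(ω_Ψ) = α_i(ω)
    (∀ (x : C.TΩ) (Ψ : Set At), C.αT i x ⊆ Ψ → Ψ ⊆ x.1 →
      C.αT i (C.Tproj x Ψ) = C.αT i x) ∧
    -- IV: α_i(ω) ⪰ α_i(ω_Ψ)
    (∀ (x : C.TΩ) (Ψ : Set At), Ψ ⊆ x.1 → C.αT i (C.Tproj x Ψ) ⊆ C.αT i x) := by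
  refine ⟨C.mem_ΛT_self i, fun x y => C.ΛT_eq_of_mem i, fun x Ψ => C.image_Tproj_ΛT i x,
    C.αT_subset i, fun x y => C.αT_eq_of_mem_ΛT i, ?_, ?_, ?_⟩
  · intro x Ψ hΨ
    rw [C.αT_Tproj i x (hΨ.trans (C.αT_subset i x)), Set.inter_eq_right.2 hΨ]
  · intro x Ψ hαΨ hΨ
    rw [C.αT_Tproj i x hΨ, Set.inter_eq_left.2 hαΨ]
  · intro x Ψ hΨ
    exact (C.αT_Tproj i x hΨ).trans_subset Set.inter_subset_left
end
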